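/- Let U ⊆ ℝ³ be an open set that is star-shaped with respect to a point p ∈ U, and let f : U → ℝ³ be a continuously differentiable vector field with ∇·f = 0 on U. Define A : U → ℝ³ by A(r) = −∫₀¹ t (r−p) × f(p + t(r−p)) dt, where × is the cross product in ℝ³. Then A is differentiable and ∇×A = f on U, where ∇×A denotes the curl (∂A₃/∂y − ∂A₂/∂z, ∂A₁/∂z − ∂A₃/∂x, ∂A₂/∂x − ∂A₁/∂y). -/

import Mathlib

/-- Points of ℝ³, represented as functions `Fin 3 → ℝ`. -/
abbrev R3 := Fin 3 → ℝ

/-- Partial derivative of a scalar function in the `i`-th coordinate direction. -/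
noncomputable def pd (i : Fin 3) (f : R3 → ℝ) (x : R3) : ℝ :=
  fderiv ℝ f x (Pi.single i 1)

/-- Divergence of a vector field on ℝ³. -/
noncomputable def div3 (F : R3 → R3) (x : R3) : ℝ :=
  ∑ i, pd i (fun y => F y i) x

/-- Cross product on ℝ³. -/
noncomputable def cross3 (a b : R3) : R3 :=
  ![a 1 * b 2 - a 2 * b 1, a 2 * b 0 - a 0 * b 2, a 0 * b 1 - a 1 * b 0]

/-- Curl of a vector field on ℝ³. -/
noncomputable def curl3 (F : R3 → R3) (x : R3) : R3 :=
  ![pd 1 (fun y => F y 2) x - pd 2 (fun y => F y 1) x,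
    pd 2 (fun y => F y 0) x - pd 0 (fun y => F y 2) x,
    pd 0 (fun y => F y 1) x - pd 1 (fun y => F y 0) x]

/-!
Differentiating under the integral sign, the curl of `A` at `r` is
`-∫₀¹ ∇×(t (x - p) × f(p + t(x - p))) dt`. For constant `a` and `w` one has `∇×(x × a) = -2a` and
`∇×(w × g) = (∇·g) w - (w·∇) g`, so with `y = p + t(r - p)` the integrand is
`t² (∇·f)(y) (r - p) - 2t f(y) - t² Df(y)(r - p)`. When `∇·f = 0` this is `-d/dt (t² f(y))`, and
the fundamental theorem of calculus gives `∇×A(r) = f(r)`.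
-/

open Function MeasureTheory Set Filter Topology
open scoped Interval

section ParametricIntegral

variable {H E : Type*} [NormedAddCommGroup H] [NormedSpace ℝ H] [LocallyCompactSpace H]
  [NormedAddCommGroup E] [NormedSpace ℝ E]

theorem hasFDerivAt_intervalIntegral_of_continuousOn {F : H → ℝ → E} {F' : H → ℝ → H →L[ℝ] E}
    {s : Set H} {x₀ : H} {a b : ℝ} (hs : s ∈ 𝓝 x₀)
    (hF : ContinuousOn (uncurry F) (s ×ˢ [[a, b]]))
    (hF' : ContinuousOn (uncurry F') (s ×ˢ [[a, b]]))
    (hdiff : ∀ x ∈ s, ∀ t ∈ [[a, b]], HasFDerivAt (F · t) (F' x t) x) :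
    HasFDerivAt (fun x => ∫ t in a..b, F x t) (∫ t in a..b, F' x₀ t) x₀ := by
  obtain ⟨K, hK, hKs, hKc⟩ := local_compact_nhds hs
  obtain ⟨C, hC⟩ := (hKc.prod isCompact_uIcc).exists_bound_of_continuousOn
    (hF'.mono (prod_mono hKs le_rfl))
  refine intervalIntegral.hasFDerivAt_integral_of_dominated_of_fderiv_le (bound := fun _ => C) hK
    ?_ (hF.uncurry_left x₀ (mem_of_mem_nhds hs)).intervalIntegrable ?_ ?_
    intervalIntegrable_const ?_
  · filter_upwards [hs] with x hx
    exact ((hF.uncurry_left x hx).mono uIoc_subset_uIcc).aestronglyMeasurable measurableSet_uIoc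
  · exact ((hF'.uncurry_left x₀ (mem_of_mem_nhds hs)).mono uIoc_subset_uIcc).aestronglyMeasurable
      measurableSet_uIoc
  · exact Eventually.of_forall fun t ht x hx => hC (x, t) ⟨hx, uIoc_subset_uIcc ht⟩
  · exact Eventually.of_forall fun t ht x hx => hdiff x (hKs hx) t (uIoc_subset_uIcc ht)

end ParametricIntegral

section Segment

variable {E F G : Type*} [NormedAddCommGroup E] [NormedSpace ℝ E]
  [NormedAddCommGroup F] [NormedSpace ℝ F] [NormedAddCommGroup G] [NormedSpace ℝ G]
  {U : Set E} {p : E}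

theorem eventually_forall_segment_mem (hU : IsOpen U) {r : E}
    (hr : ∀ t ∈ Icc (0 : ℝ) 1, p + t • (r - p) ∈ U) :
    ∀ᶠ x in 𝓝 r, ∀ t ∈ Icc (0 : ℝ) 1, p + t • (x - p) ∈ U :=
  isCompact_Icc.eventually_forall_of_forall_eventually fun t ht =>
    (Continuous.continuousAt (by fun_prop) :
      ContinuousAt (fun z : E × ℝ => p + z.2 • (z.1 - p)) (r, t)).preimage_mem_nhds
      (hU.mem_nhds (hr t ht))

theorem ContinuousOn.comp_segment {X : Type*} [TopologicalSpace X] {g : E → X}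
    (hg : ContinuousOn g U) {s : Set E} (hs : ∀ x ∈ s, ∀ t ∈ Icc (0 : ℝ) 1, p + t • (x - p) ∈ U) :
    ContinuousOn (fun z : E × ℝ => g (p + z.2 • (z.1 - p))) (s ×ˢ Icc 0 1) :=
  hg.comp (by fun_prop) fun z hz => hs z.1 hz.1 z.2 hz.2

theorem continuousOn_fderiv_integrand_bilinear_segment (B : E →L[ℝ] F →L[ℝ] G) {f : E → F}
    (hU : IsOpen U) (hf : ContDiffOn ℝ 1 f U) {s : Set E}
    (hs : ∀ x ∈ s, ∀ t ∈ Icc (0 : ℝ) 1, p + t • (x - p) ∈ U) :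
    ContinuousOn (fun z : E × ℝ => z.2 • (B.flip (f (p + z.2 • (z.1 - p))) +
      z.2 • (B (z.1 - p)).comp (fderiv ℝ f (p + z.2 • (z.1 - p))))) (s ×ˢ Icc 0 1) := by
  have hf₀ := hf.continuousOn.comp_segment hs
  have hf₁ := (hf.continuousOn_fderiv_of_isOpen hU le_rfl).comp_segment hs
  exact continuousOn_snd.smul ((B.flip.continuous.comp_continuousOn hf₀).add
    (continuousOn_snd.smul ((B.continuous.comp_continuousOn (by fun_prop)).clm_comp hf₁)))

theorem hasFDerivAt_integral_bilinear_segment [LocallyCompactSpace E]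
    (B : E →L[ℝ] F →L[ℝ] G) {f : E → F} (hU : IsOpen U) (hf : ContDiffOn ℝ 1 f U) {r : E}
    (hr : ∀ t ∈ Icc (0 : ℝ) 1, p + t • (r - p) ∈ U) :
    HasFDerivAt (fun x => ∫ t in (0 : ℝ)..1, t • B (x - p) (f (p + t • (x - p))))
      (∫ t in (0 : ℝ)..1, t • (B.flip (f (p + t • (r - p))) +
        t • (B (r - p)).comp (fderiv ℝ f (p + t • (r - p))))) r := by
  set s := {x | ∀ t ∈ Icc (0 : ℝ) 1, p + t • (x - p) ∈ U}
  have hs : ∀ x ∈ s, ∀ t ∈ Icc (0 : ℝ) 1, p + t • (x - p) ∈ U := fun _ hx => hx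
  refine hasFDerivAt_intervalIntegral_of_continuousOn
    (F := fun x t => t • B (x - p) (f (p + t • (x - p))))
    (F' := fun x t => t • (B.flip (f (p + t • (x - p))) +
      t • (B (x - p)).comp (fderiv ℝ f (p + t • (x - p)))))
    (eventually_forall_segment_mem hU hr) ?_ ?_ ?_ <;> rw [uIcc_of_le zero_le_one]
  · exact continuousOn_snd.smul ((B.continuous.comp_continuousOn (by fun_prop)).clm_apply
      (hf.continuousOn.comp_segment hs))
  · exact continuousOn_fderiv_integrand_bilinear_segment B hU hf hs
  · intro x hx t ht
    have hy := hs x hx t ht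
    have hfy : HasFDerivAt f (fderiv ℝ f (p + t • (x - p))) (p + t • (x - p)) :=
      ((hf.contDiffAt (hU.mem_nhds hy)).differentiableAt one_ne_zero).hasFDerivAt
    have hsub : HasFDerivAt (fun x => x - p) (ContinuousLinearMap.id ℝ E) x :=
      (hasFDerivAt_id x).sub_const p
    convert (B.hasFDerivAt_of_bilinear hsub
      (hfy.comp x ((hsub.const_smul t).const_add p))).const_smul t using 1
    congr 1
    ext v
    simp [add_comm]

theorem integral_deriv_sq_smul_comp_segment [CompleteSpace F] {f : E → F} (hU : IsOpen U)
    (hf : ContDiffOn ℝ 1 f U) {r : E} (hr : ∀ t ∈ Icc (0 : ℝ) 1, p + t • (r - p) ∈ U) :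
    ∫ t in (0 : ℝ)..1, ((2 * t) • f (p + t • (r - p)) +
      t ^ 2 • fderiv ℝ f (p + t • (r - p)) (r - p)) = f r := by
  rw [← uIcc_of_le zero_le_one] at hr
  have hderiv : ∀ t ∈ [[(0 : ℝ), 1]], HasDerivAt (fun s => s ^ 2 • f (p + s • (r - p)))
      ((2 * t) • f (p + t • (r - p)) + t ^ 2 • fderiv ℝ f (p + t • (r - p)) (r - p)) t := by
    intro t ht
    have hfy : HasFDerivAt f (fderiv ℝ f (p + t • (r - p))) (p + t • (r - p)) :=
      ((hf.contDiffAt (hU.mem_nhds (hr t ht))).differentiableAt one_ne_zero).hasFDerivAt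
    have hseg : HasDerivAt (fun s : ℝ => p + s • (r - p)) (r - p) t := by
      simpa using ((hasDerivAt_id t).smul_const (r - p)).const_add p
    convert (hasDerivAt_pow 2 t).smul (hfy.comp_hasDerivAt t hseg) using 1
    · rfl
    · norm_num [add_comm]
  have hcont : ContinuousOn (fun t : ℝ => (2 * t) • f (p + t • (r - p)) +
      t ^ 2 • fderiv ℝ f (p + t • (r - p)) (r - p)) [[0, 1]] := by
    have hf₀ : ContinuousOn (fun t : ℝ => f (p + t • (r - p))) [[0, 1]] :=
      hf.continuousOn.comp (by fun_prop) hr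
    have hf₁ : ContinuousOn (fun t : ℝ => fderiv ℝ f (p + t • (r - p))) [[0, 1]] :=
      (hf.continuousOn_fderiv_of_isOpen hU le_rfl).comp (by fun_prop) hr
    exact ((continuousOn_const.mul continuousOn_id).smul hf₀).add
      ((continuousOn_id.pow 2).smul (hf₁.clm_apply continuousOn_const))
  rw [intervalIntegral.integral_eq_sub_of_hasDerivAt hderiv hcont.intervalIntegrable]
  simp

end Segment

section Curl

noncomputable def crossL : R3 →L[ℝ] R3 →L[ℝ] R3 :=
  (crossProduct : R3 →ₗ[ℝ] R3 →ₗ[ℝ] R3).toContinuousBilinearMap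

theorem crossL_apply (a b : R3) : crossL a b = cross3 a b :=
  cross_apply a b

noncomputable def curlOfFDeriv : (R3 →L[ℝ] R3) →L[ℝ] R3 :=
  LinearMap.toContinuousLinearMap
    { toFun := fun L => ![L (Pi.single 1 1) 2 - L (Pi.single 2 1) 1,
        L (Pi.single 2 1) 0 - L (Pi.single 0 1) 2, L (Pi.single 0 1) 1 - L (Pi.single 1 1) 0]
      map_add' := fun L M => by ext i; fin_cases i <;> simp <;> ring
      map_smul' := fun c L => by ext i; fin_cases i <;> simp <;> ring }

theorem pd_eq_fderiv_apply {g : R3 → R3} {x : R3} (hg : DifferentiableAt ℝ g x) (i j : Fin 3) :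
    pd j (fun y => g y i) x = fderiv ℝ g x (Pi.single j 1) i := by
  have h : HasFDerivAt (fun y => g y i) ((ContinuousLinearMap.proj i).comp (fderiv ℝ g x)) x :=
    (hasFDerivAt_apply i (g x)).comp x hg.hasFDerivAt (g := fun f : R3 => f i)
  rw [pd, h.fderiv]
  rfl

theorem div3_eq_sum_fderiv {g : R3 → R3} {x : R3} (hg : DifferentiableAt ℝ g x) :
    div3 g x = ∑ i, fderiv ℝ g x (Pi.single i 1) i := by
  simp only [div3, pd_eq_fderiv_apply hg]

theorem curl3_eq_curlOfFDeriv {g : R3 → R3} {x : R3} (hg : DifferentiableAt ℝ g x) :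
    curl3 g x = curlOfFDeriv (fderiv ℝ g x) := by
  simp only [curl3, pd_eq_fderiv_apply hg]
  rfl

theorem curlOfFDeriv_crossL_flip (a : R3) : curlOfFDeriv (crossL.flip a) = -(2 : ℝ) • a := by
  ext i; fin_cases i <;> simp [curlOfFDeriv, crossL_apply, cross3] <;> ring

theorem curlOfFDeriv_crossL_comp (w : R3) (M : R3 →L[ℝ] R3) :
    curlOfFDeriv ((crossL w).comp M) = (∑ i, M (Pi.single i 1) i) • w - M w := by
  have hMw : M w = ∑ i, w i • M (Pi.single i 1) := by
    conv_lhs => rw [pi_eq_sum_univ' w]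
    simp only [map_sum, map_smul]
  ext i; fin_cases i <;> simp [curlOfFDeriv, crossL_apply, cross3, hMw, Fin.sum_univ_three] <;> ring

end Curl

theorem stmt2_general (U : Set R3) (hU : IsOpen U) (p : R3)
    (hstar : ∀ r ∈ U, ∀ t ∈ Set.Icc (0 : ℝ) 1, p + t • (r - p) ∈ U)
    (f : R3 → R3) (hf : ContDiffOn ℝ 1 f U) (hdiv : ∀ x ∈ U, div3 f x = 0)
    (A : R3 → R3)
    (hA : ∀ r ∈ U, A r = -∫ t in (0:ℝ)..1, t • cross3 (r - p) (f (p + t • (r - p)))) :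
    ∀ r ∈ U, DifferentiableAt ℝ A r ∧ curl3 A r = f r := by
  intro r hr
  have hseg := hstar r hr
  set y : ℝ → R3 := fun t => p + t • (r - p)
  have hAr : HasFDerivAt A (-∫ t in (0 : ℝ)..1,
      t • (crossL.flip (f (y t)) + t • (crossL (r - p)).comp (fderiv ℝ f (y t)))) r := by
    refine (hasFDerivAt_integral_bilinear_segment crossL hU hf hseg).neg.congr_of_eventuallyEq ?_
    filter_upwards [hU.mem_nhds hr] with x hx
    simp only [hA x hx, crossL_apply, Pi.neg_apply]
  have hint : IntervalIntegrable (fun t =>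
      t • (crossL.flip (f (y t)) + t • (crossL (r - p)).comp (fderiv ℝ f (y t)))) volume 0 1 := by
    have h := continuousOn_fderiv_integrand_bilinear_segment crossL hU hf (s := {r})
      fun x hx => hx ▸ hseg
    refine ContinuousOn.intervalIntegrable ?_
    rw [uIcc_of_le zero_le_one]
    exact h.comp (Continuous.prodMk_right r).continuousOn fun t ht => ⟨rfl, ht⟩
  refine ⟨hAr.differentiableAt, ?_⟩
  rw [curl3_eq_curlOfFDeriv hAr.differentiableAt, hAr.fderiv, map_neg,
    ← curlOfFDeriv.intervalIntegral_comp_comm hint, neg_eq_iff_eq_neg,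
    ← integral_deriv_sq_smul_comp_segment hU hf hseg, ← intervalIntegral.integral_neg]
  refine intervalIntegral.integral_congr fun t ht => ?_
  rw [uIcc_of_le zero_le_one] at ht
  have hdivy : ∑ i, fderiv ℝ f (y t) (Pi.single i 1) i = 0 := by
    rw [← div3_eq_sum_fderiv ((hf.contDiffAt (hU.mem_nhds (hseg t ht))).differentiableAt
      one_ne_zero)]
    exact hdiv _ (hseg t ht)
  simp only [map_smul, map_add, curlOfFDeriv_crossL_flip, curlOfFDeriv_crossL_comp, hdivy]
  module

/-- On an open set `U ⊆ ℝ³` star-shaped with respect to `p ∈ U`, for a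
continuously differentiable divergence-free vector field `f`, the vector potential
`A(r) = −∫₀¹ t (r−p) × f(p + t(r−p)) dt` is differentiable and satisfies `∇×A = f` on `U`. -/
theorem stmt2 (U : Set R3) (hU : IsOpen U) (p : R3) (hp : p ∈ U)
    (hstar : ∀ r ∈ U, ∀ t ∈ Set.Icc (0 : ℝ) 1, p + t • (r - p) ∈ U)
    (f : R3 → R3) (hf : ContDiffOn ℝ 1 f U) (hdiv : ∀ x ∈ U, div3 f x = 0)
    (A : R3 → R3)
    (hA : ∀ r ∈ U, A r = -∫ t in (0:ℝ)..1, t • cross3 (r - p) (f (p + t • (r - p)))) :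
    ∀ r ∈ U, DifferentiableAt ℝ A r ∧ curl3 A r = f r :=
  stmt2_general U hU p hstar f hf hdiv A hA
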